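/- arXiv:1702.05978 — 2 statements merged into one kernel-verified Lean document; each statement's English description precedes it below -/
import Mathlib

section
/- For k ≥ 1, u ∈ ℂ with |u| = 1, u = e^{ic} with c ∈ ℝ, v ∈ ℂ with |v| = 1, and l ∈ {0,…,k−1}, define e_l(z) = u^{kz/(2π)} Σ_{j∈ℤ} (v^{−k} e^{−l − kj/2} u^{ik/(2π)})^j e^{i(l+jk)z}. Then the series converges absolutely and locally uniformly on ℂ, and e_l is an entire function. -/
/-!
After factoring out `exp (I * l * z)`, the `j`-th term is the Jacobi theta term
`exp (2πi j w + πi j² τ)` with `τ = i k / (2π)` (so `im τ > 0` as `k ≥ 1`) and `w` an affine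
function of `z`; the unimodular `v ^ (-k)` only shifts `w` by `-k log v / (2πi)`. So
`e_l z = exp (i (c k / (2π) + l) z) · θ(w z, τ)`, and everything follows from the Gaussian bound
on theta terms, uniform for `im w` bounded, via the Weierstrass M-test.
-/

open Complex Filter

open Real in
theorem tendstoLocallyUniformly_mul_jacobiTheta₂ {X : Type*} [TopologicalSpace X]
    [LocallyCompactSpace X] {g w : X → ℂ} (hg : Continuous g) (hw : Continuous w) {τ : ℂ}
    (hτ : 0 < τ.im) :
    TendstoLocallyUniformly (fun (s : Finset ℤ) x => g x * ∑ n ∈ s, jacobiTheta₂_term n (w x) τ)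
      (fun x => g x * jacobiTheta₂ (w x) τ) atTop := by
  rw [tendstoLocallyUniformly_iff_forall_isCompact]
  intro K hK
  obtain ⟨M, hM⟩ := hK.exists_bound_of_continuousOn hg.continuousOn
  obtain ⟨S, hS⟩ := hK.exists_bound_of_continuousOn (continuous_im.comp hw).continuousOn
  have hbound : ∀ n x, x ∈ K → ‖g x * jacobiTheta₂_term n (w x) τ‖ ≤
      M * (|n| ^ 0 * rexp (-π * (τ.im * n ^ 2 - 2 * S * |n|))) := fun n x hx => by
    rw [norm_mul, pow_zero, one_mul]
    exact mul_le_mul (hM x hx) (norm_jacobiTheta₂_term_le hτ (hS x hx) le_rfl n) (norm_nonneg _)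
      ((norm_nonneg _).trans (hM x hx))
  have := tendstoUniformlyOn_tsum
    ((summable_pow_mul_jacobiTheta₂_term_bound S hτ 0).mul_left M) hbound
  simpa only [← Finset.mul_sum, tsum_mul_left, jacobiTheta₂] using this

theorem mul_exp_zpow_mul_exp_eq_exp_mul_jacobiTheta₂_term {q : ℂ} (hq : q ≠ 0) (κ μ z : ℂ) (j : ℤ) :
    (q * exp (-κ * j / 2)) ^ j * exp (I * (μ + j * κ) * z) =
      exp (I * μ * z) *
        jacobiTheta₂_term j ((log q + I * κ * z) / (2 * Real.pi * I)) (I * κ / (2 * Real.pi)) := by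
  have hπ : (Real.pi : ℂ) ≠ 0 := ofReal_ne_zero.2 Real.pi_ne_zero
  conv_lhs => rw [← exp_log hq]
  rw [jacobiTheta₂_term, ← exp_add, ← exp_int_mul, ← exp_add, ← exp_add]
  congr 1
  field_simp
  ring_nf
  rw [I_sq]
  ring

/-- Here `u = e^{ic}`, so `u^{kz/(2π)} = exp (i c k z / (2π))` and `u^{ik/(2π)} = e^{-ck/(2π)}`. -/
theorem e_l_entire_general (k : ℕ) (hk : 1 ≤ k) (c : ℝ) (v : ℂ) (hv : ‖v‖ = 1)
    (l : ℕ)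
    (term : ℤ → ℂ → ℂ)
    (hterm : ∀ (j : ℤ) (z : ℂ),
      term j z =
        (v ^ (-(k : ℤ)) * Complex.exp (-(l : ℂ) - (k : ℂ) * j / 2) *
            Complex.exp (-((c : ℂ) * k / (2 * Real.pi)))) ^ j *
          Complex.exp (Complex.I * ((l : ℂ) + j * k) * z))
    (e_l : ℂ → ℂ)
    (he_l : ∀ z : ℂ,
      e_l z = Complex.exp (Complex.I * c * k * z / (2 * Real.pi)) * ∑' j : ℤ, term j z) :
    (∀ z : ℂ, Summable fun j : ℤ => ‖term j z‖) ∧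
    TendstoLocallyUniformly
      (fun (s : Finset ℤ) (z : ℂ) =>
        Complex.exp (Complex.I * c * k * z / (2 * Real.pi)) * ∑ j ∈ s, term j z)
      e_l atTop ∧
    Differentiable ℂ e_l := by
  have hv0 : v ≠ 0 := by rintro rfl; simp at hv
  set q : ℂ := v ^ (-(k : ℤ)) * exp (-(l : ℂ)) * exp (-((c : ℂ) * k / (2 * Real.pi)))
  set w : ℂ → ℂ := fun z => (log q + I * k * z) / (2 * Real.pi * I)
  set τ : ℂ := I * k / (2 * Real.pi)
  set g : ℂ → ℂ := fun z => exp (I * c * k * z / (2 * Real.pi)) * exp (I * l * z)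
  have hτ : 0 < τ.im := by
    have hk' : (0 : ℝ) < k := by exact_mod_cast hk
    simpa [τ, div_im, Real.pi_pos] using hk'
  have hterm_eq : ∀ j z, term j z = exp (I * l * z) * jacobiTheta₂_term j (w z) τ := by
    intro j z
    rw [hterm, ← mul_exp_zpow_mul_exp_eq_exp_mul_jacobiTheta₂_term (by simp [q, hv0]) k]
    congr 2
    rw [sub_eq_add_neg, exp_add]
    simp only [q]
    ring_nf
  have hpartial : ∀ (s : Finset ℤ) z, exp (I * c * k * z / (2 * Real.pi)) * ∑ j ∈ s, term j z =
      g z * ∑ j ∈ s, jacobiTheta₂_term j (w z) τ := by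
    intro s z
    simp only [hterm_eq, ← Finset.mul_sum, g, mul_assoc]
  have he_l_eq : e_l = fun z => g z * jacobiTheta₂ (w z) τ := by
    ext z
    rw [he_l, jacobiTheta₂]
    simp only [hterm_eq, tsum_mul_left, g, mul_assoc]
  have hw : Differentiable ℂ w := by fun_prop
  refine ⟨fun z => ?_, ?_, ?_⟩
  · simp only [hterm_eq, norm_mul]
    exact ((summable_jacobiTheta₂_term_iff _ _).2 hτ).norm.mul_left _
  · simp only [hpartial, he_l_eq]
    exact tendstoLocallyUniformly_mul_jacobiTheta₂ (by fun_prop) hw.continuous hτ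
  · rw [he_l_eq]
    exact (by fun_prop : Differentiable ℂ g).mul
      fun z => (differentiableAt_jacobiTheta₂_fst (w z) hτ).comp z (hw z)

/-- The series defining the basis vector `e_l` of `H_k` converges absolutely and
locally uniformly on `ℂ`, and `e_l` is an entire function. Here `u = e^{ic}` and
`u^{ik/(2π)} = e^{-ck/(2π)}`. -/
theorem e_l_entire (k : ℕ) (hk : 1 ≤ k) (c : ℝ) (v : ℂ) (hv : ‖v‖ = 1)
    (l : ℕ) (hl : l < k)
    (term : ℤ → ℂ → ℂ)
    (hterm : ∀ (j : ℤ) (z : ℂ),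
      term j z =
        (v ^ (-(k : ℤ)) * Complex.exp (-(l : ℂ) - (k : ℂ) * j / 2) *
            Complex.exp (-((c : ℂ) * k / (2 * Real.pi)))) ^ j *
          Complex.exp (Complex.I * ((l : ℂ) + j * k) * z))
    (e_l : ℂ → ℂ)
    (he_l : ∀ z : ℂ,
      e_l z = Complex.exp (Complex.I * c * k * z / (2 * Real.pi)) * ∑' j : ℤ, term j z) :
    (∀ z : ℂ, Summable fun j : ℤ => ‖term j z‖) ∧
    TendstoLocallyUniformly
      (fun (s : Finset ℤ) (z : ℂ) =>
        Complex.exp (Complex.I * c * k * z / (2 * Real.pi)) * ∑ j ∈ s, term j z)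
      e_l atTop ∧
    Differentiable ℂ e_l :=
  e_l_entire_general k hk c v hv l term hterm e_l he_l
end

section
/- For k ≥ 1, u = e^{ic} with c ∈ ℝ, |v| = 1, and l ∈ {0,…,k−1}, the entire function e_l(z) = e^{ickz/(2π)} Σ_{j∈ℤ} (v^{−k} e^{−l−kj/2} e^{ick/(2π)·i})^j e^{i(l+jk)z} satisfies the quasi-periodicity relations e_l(z + 2π) = u^k e_l(z) and e_l(z + i) = v^k e^{−ikz + k/2} e_l(z) for all z ∈ ℂ. -/
open Complex

/-!
Write `e_l(z) = e^{ickz/(2π)} θ(z)` with `θ(z) = ∑ⱼ aⱼ e^{i(l+jk)z}`. Every frequency `l + jk` is an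
integer, so `θ` is `2π`-periodic and the prefactor alone produces `u^k`. Shifting `z` by `i`
multiplies the `j`-th term by `e^{-(l+jk)}`, which turns it into a fixed multiple of the
`(j+1)`-st term (the Gaussian factor `e^{-kj²/2}` in `aⱼ` is designed for this), so reindexing
`j ↦ j + 1` gives the second relation.
-/

namespace QuasiPeriodic

noncomputable def thetaTerm (w l k B z : ℂ) (j : ℤ) : ℂ :=
  (w * exp (-l - k * j / 2) * exp B) ^ j * exp (I * (l + j * k) * z)

noncomputable def thetaSeries (w l k B z : ℂ) : ℂ :=
  ∑' j : ℤ, thetaTerm w l k B z j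

lemma exp_int_mul_I_mul_add_two_pi (n : ℤ) (z : ℂ) :
    exp (I * n * (z + 2 * Real.pi)) = exp (I * n * z) := by
  rw [show I * n * (z + 2 * Real.pi) = I * n * z + n * (2 * Real.pi * I) by ring,
    exp_add, exp_int_mul_two_pi_mul_I, mul_one]

lemma thetaSeries_add_two_pi (w B z : ℂ) (l k : ℤ) :
    thetaSeries w l k B (z + 2 * Real.pi) = thetaSeries w l k B z := by
  refine tsum_congr fun j => ?_
  simpa only [thetaTerm, Int.cast_add, Int.cast_mul] using
    congrArg ((w * exp (-l - k * j / 2) * exp B) ^ j * ·)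
      (exp_int_mul_I_mul_add_two_pi (l + j * k) z)

lemma thetaTerm_eq (w l k B z : ℂ) (j : ℤ) :
    thetaTerm w l k B z j = w ^ j * exp (j * (-l - k * j / 2 + B) + I * (l + j * k) * z) := by
  rw [thetaTerm, mul_zpow, mul_zpow, ← exp_int_mul, ← exp_int_mul, mul_assoc, ← exp_add,
    mul_assoc, ← exp_add]
  congr 2
  ring

lemma thetaTerm_add_I {w : ℂ} (hw : w ≠ 0) (l k B z : ℂ) (j : ℤ) :
    thetaTerm w l k B (z + I) j =
      w⁻¹ * exp (-B) * exp (-I * k * z + k / 2) * thetaTerm w l k B z (j + 1) := by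
  have hexp : j * (-l - k * j / 2 + B) + I * (l + j * k) * (z + I) =
      -B + (-I * k * z + k / 2) +
        ((j + 1 : ℤ) * (-l - k * (j + 1 : ℤ) / 2 + B) + I * (l + (j + 1 : ℤ) * k) * z) := by
    push_cast
    linear_combination (l + j * k) * I_mul_I
  rw [thetaTerm_eq, thetaTerm_eq, hexp, exp_add, exp_add, zpow_add_one₀ hw]
  field_simp

lemma thetaSeries_add_I {w : ℂ} (hw : w ≠ 0) (l k B z : ℂ) :
    thetaSeries w l k B (z + I) =
      w⁻¹ * exp (-B) * exp (-I * k * z + k / 2) * thetaSeries w l k B z := by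
  rw [thetaSeries, thetaSeries, ← tsum_mul_left]
  simp only [thetaTerm_add_I hw]
  exact (Equiv.addRight (1 : ℤ)).tsum_eq fun j =>
    w⁻¹ * exp (-B) * exp (-I * k * z + k / 2) * thetaTerm w l k B z j

end QuasiPeriodic

open QuasiPeriodic in
theorem e_l_quasi_periodic_general (k : ℕ) (c : ℝ) (u v : ℂ)
    (hu : u = Complex.exp (Complex.I * c)) (hv : ‖v‖ = 1)
    (l : ℕ)
    (e_l : ℂ → ℂ)
    (he_l : ∀ z : ℂ,
      e_l z = Complex.exp (Complex.I * c * k * z / (2 * Real.pi)) *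
        ∑' j : ℤ,
          (v ^ (-(k : ℤ)) * Complex.exp (-(l : ℂ) - (k : ℂ) * j / 2) *
              Complex.exp (Complex.I * c * k / (2 * Real.pi) * Complex.I)) ^ j *
            Complex.exp (Complex.I * ((l : ℂ) + j * k) * z)) :
    ∀ z : ℂ,
      e_l (z + 2 * Real.pi) = u ^ k * e_l z ∧
      e_l (z + Complex.I) =
        v ^ k * Complex.exp (-Complex.I * k * z + k / 2) * e_l z := by
  set B : ℂ := I * c * k / (2 * Real.pi) * I
  have hπ : (Real.pi : ℂ) ≠ 0 := ofReal_ne_zero.mpr Real.pi_ne_zero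
  have hv0 : v ≠ 0 := norm_ne_zero_iff.mp (by rw [hv]; exact one_ne_zero)
  have he : ∀ z, e_l z = exp (I * c * k * z / (2 * Real.pi)) *
      thetaSeries (v ^ (-(k : ℤ))) l k B z := he_l
  intro z
  constructor
  · have hpre : I * c * k * (z + 2 * Real.pi) / (2 * Real.pi) =
        I * c * k * z / (2 * Real.pi) + k * (I * c) := by
      field_simp
    have hθ := thetaSeries_add_two_pi (v ^ (-(k : ℤ))) B z l k
    push_cast at hθ
    rw [he, he, hθ, hpre, exp_add, hu, ← exp_nat_mul]
    ring
  · have hpre : I * c * k * (z + I) / (2 * Real.pi) = I * c * k * z / (2 * Real.pi) + B := by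
      simp only [B]
      field_simp
    rw [he, he, thetaSeries_add_I (zpow_ne_zero _ hv0), hpre, exp_add, zpow_neg, inv_inv,
      zpow_natCast, exp_neg]
    field_simp

/-- Quasi-periodicity of the basis functions `e_l`:
`e_l(z+2π) = u^k e_l(z)` and `e_l(z+i) = v^k e^{−ikz+k/2} e_l(z)`,
where `u = e^{ic}` and `u^{ik/(2π)} = e^{ick/(2π)·i}`. -/
theorem e_l_quasi_periodic (k : ℕ) (hk : 1 ≤ k) (c : ℝ) (u v : ℂ)
    (hu : u = Complex.exp (Complex.I * c)) (hv : ‖v‖ = 1)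
    (l : ℕ) (hl : l < k)
    (e_l : ℂ → ℂ)
    (he_l : ∀ z : ℂ,
      e_l z = Complex.exp (Complex.I * c * k * z / (2 * Real.pi)) *
        ∑' j : ℤ,
          (v ^ (-(k : ℤ)) * Complex.exp (-(l : ℂ) - (k : ℂ) * j / 2) *
              Complex.exp (Complex.I * c * k / (2 * Real.pi) * Complex.I)) ^ j *
            Complex.exp (Complex.I * ((l : ℂ) + j * k) * z)) :
    ∀ z : ℂ,
      e_l (z + 2 * Real.pi) = u ^ k * e_l z ∧
      e_l (z + Complex.I) =
        v ^ k * Complex.exp (-Complex.I * k * z + k / 2) * e_l z :=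
  e_l_quasi_periodic_general k c u v hu hv l e_l he_l
end
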